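/- Fix δ ∈ (0,1) and suppose the realization of the data satisfies ‖P_T^{r_i} − 𝔔_T^{r_i}‖_F ≤ S(r_i, δ) for every integer i ≥ 0 with 2^i ≤ T, where r_i = 2^i. If i ≥ 0 satisfies 2^{i+1} ≤ T and ‖𝔔_T^{r_i} − 𝔔_T^{r_{i+1}}‖_F > 4·S(r_i, δ), then max_{0 ≤ t ≤ r_{i+1}−1} ‖P_T − P_{T−t}‖_F > S(r_i, δ). -/
import Mathlib


open MeasureTheory

/-- The discrepancy `‖P − Q‖_F`. -/
noncomputable def dF {ι Z : Type*} [MeasurableSpace Z] (F : ι → Z → ℝ)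
    (P Q : Measure Z) : ℝ :=
  ⨆ n, |(∫ z, F n z ∂P) - ∫ z, F n z ∂Q|

/-- The average distribution `P_T^r = (1/r)·Σ_{t=T−r+1}^T P_t`. -/
noncomputable def avgMeas {Z : Type*} [MeasurableSpace Z]
    (P : ℕ → Measure Z) (T r : ℕ) : Measure Z :=
  (r : ENNReal)⁻¹ • ∑ t ∈ Finset.Icc (T - r + 1) T, P t

/-- Empirical average `(1/r)·Σ_{t=T−r+1}^T f(Z_t(ω))`. -/
noncomputable def empAvg {Z Ω : Type*} (Zs : ℕ → Ω → Z) (T r : ℕ)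
    (f : Z → ℝ) (ω : Ω) : ℝ :=
  (r : ℝ)⁻¹ * ∑ t ∈ Finset.Icc (T - r + 1) T, f (Zs t ω)

/-- `‖P − 𝔔_T^r(ω)‖_F`. -/
noncomputable def dPE {ι Z Ω : Type*} [MeasurableSpace Z] (F : ι → Z → ℝ)
    (P : Measure Z) (Zs : ℕ → Ω → Z) (T r : ℕ) (ω : Ω) : ℝ :=
  ⨆ n, |(∫ z, F n z ∂P) - empAvg Zs T r (F n) ω|

/-- `‖𝔔_T^r(ω) − 𝔔_T^s(ω)‖_F`, discrepancy between two empirical distributions. -/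
noncomputable def dEE {ι Z Ω : Type*} (F : ι → Z → ℝ) (Zs : ℕ → Ω → Z)
    (T r s : ℕ) (ω : Ω) : ℝ :=
  ⨆ n, |empAvg Zs T r (F n) ω - empAvg Zs T s (F n) ω|

/-- `S(r, δ)`. -/
noncomputable def Sfun (C1 C2 r δ : ℝ) : ℝ :=
  (C1 + C2 * Real.sqrt (2 * Real.log (Real.pi ^ 2 / (6 * δ)))) / Real.sqrt r
    + C2 * Real.sqrt (2 * Real.log (Real.logb 2 r + 10) / r)

/-- `max_{0 ≤ t ≤ r−1} ‖P_T − P_{T−t}‖_F`. -/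
noncomputable def maxDrift {ι Z : Type*} [MeasurableSpace Z] (F : ι → Z → ℝ)
    (P : ℕ → Measure Z) (T r : ℕ) : ℝ :=
  ⨆ t : Fin r, dF F (P T) (P (T - (t : ℕ)))

section myAux
variable {Z Ω : Type*} [MeasurableSpace Z]

lemma my_abs_integral_le {B : ℝ} (f : Z → ℝ) (hf : ∀ z, |f z| ≤ B)
    (P : Measure Z) [IsProbabilityMeasure P] : |∫ z, f z ∂P| ≤ B := by
  have h := norm_integral_le_of_norm_le_const (μ := P) (f := f) (C := B)
    (Filter.Eventually.of_forall fun z => by simpa using hf z)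
  simpa using h

lemma my_integrable {B : ℝ} (f : Z → ℝ) (hm : Measurable f) (hf : ∀ z, |f z| ≤ B)
    (P : Measure Z) [IsFiniteMeasure P] : Integrable f P :=
  Integrable.mono' (integrable_const B) hm.aestronglyMeasurable
    (Filter.Eventually.of_forall fun z => by simpa using hf z)

lemma my_integral_avgMeas {B : ℝ} (P : ℕ → Measure Z) (hP : ∀ t, IsProbabilityMeasure (P t))
    (T r : ℕ) (f : Z → ℝ) (hm : Measurable f) (hf : ∀ z, |f z| ≤ B) :
    ∫ z, f z ∂(avgMeas P T r)
      = (r : ℝ)⁻¹ * ∑ t ∈ Finset.Icc (T - r + 1) T, ∫ z, f z ∂(P t) := by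
  rw [avgMeas, integral_smul_measure, integral_finset_sum_measure
    (fun t _ => haveI := hP t; my_integrable f hm hf (P t))]
  simp [smul_eq_mul]

lemma my_avgMeas_prob (P : ℕ → Measure Z) (hP : ∀ t, IsProbabilityMeasure (P t))
    (T r : ℕ) (hr : 1 ≤ r) (hrT : r ≤ T) : IsProbabilityMeasure (avgMeas P T r) := by
  constructor
  have hcard : (Finset.Icc (T - r + 1) T).card = r := by
    rw [Nat.card_Icc]; omega
  rw [avgMeas, Measure.smul_apply, Measure.finset_sum_apply]
  simp only [measure_univ, Finset.sum_const, hcard, nsmul_eq_mul, mul_one, smul_eq_mul]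
  rw [ENNReal.inv_mul_cancel (by exact_mod_cast Nat.cast_ne_zero.mpr (by omega : r ≠ 0)) (by simp)]

lemma my_empAvg_abs_le {B : ℝ} (f : Z → ℝ) (hf : ∀ z, |f z| ≤ B)
    (Zs : ℕ → Ω → Z) (ω : Ω) (T s : ℕ) (hs : 1 ≤ s) (hsT : s ≤ T) :
    |empAvg Zs T s f ω| ≤ B := by
  have hcard : (Finset.Icc (T - s + 1) T).card = s := by rw [Nat.card_Icc]; omega
  have hs0 : (0:ℝ) < (s:ℝ) := by exact_mod_cast hs
  rw [empAvg, abs_mul, abs_inv, Nat.abs_cast]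
  calc (s:ℝ)⁻¹ * |∑ t ∈ Finset.Icc (T - s + 1) T, f (Zs t ω)|
      ≤ (s:ℝ)⁻¹ * ∑ t ∈ Finset.Icc (T - s + 1) T, |f (Zs t ω)| := by
        gcongr
        exact Finset.abs_sum_le_sum_abs _ _
    _ ≤ (s:ℝ)⁻¹ * ∑ t ∈ Finset.Icc (T - s + 1) T, B := by
        gcongr with t ht
        exact hf _
    _ = B := by
        rw [Finset.sum_const, hcard, nsmul_eq_mul, inv_mul_cancel_left₀ hs0.ne']

lemma my_bdd_abs_sub {g h : ℕ → ℝ} {B : ℝ} (hg : ∀ n, |g n| ≤ B) (hh : ∀ n, |h n| ≤ B) :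
    BddAbove (Set.range fun n => |g n - h n|) := by
  refine ⟨2 * B, ?_⟩
  rintro x ⟨n, rfl⟩
  calc |g n - h n| ≤ |g n| + |h n| := abs_sub (g n) (h n)
    _ ≤ 2 * B := by linarith [hg n, hh n]

end myAux

lemma my_Sfun_mono (C1 C2 δ : ℝ) (hC1 : 0 ≤ C1) (hC2 : 0 ≤ C2)
    (hδ0 : 0 < δ) (hδ1 : δ < 1) (i : ℕ) :
    Sfun C1 C2 ((2 ^ (i + 1) : ℕ) : ℝ) δ ≤ Sfun C1 C2 ((2 ^ i : ℕ) : ℝ) δ := by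
  have h2i : (0:ℝ) < 2 ^ i := by positivity
  have hlogb : ∀ k : ℕ, Real.logb 2 ((2:ℝ) ^ k) = k := fun k => by
    simp [Real.logb_pow]
  unfold Sfun
  push_cast
  have hK : 0 ≤ C1 + C2 * Real.sqrt (2 * Real.log (Real.pi ^ 2 / (6 * δ))) :=
    add_nonneg hC1 (mul_nonneg hC2 (Real.sqrt_nonneg _))
  refine add_le_add ?_ ?_
  · refine div_le_div_of_nonneg_left hK (Real.sqrt_pos.mpr h2i) ?_
    exact Real.sqrt_le_sqrt (by
      have : (2:ℝ) ^ i ≤ 2 ^ (i+1) := by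
        rw [pow_succ]; nlinarith
      linarith)
  · refine mul_le_mul_of_nonneg_left ?_ hC2
    refine Real.sqrt_le_sqrt ?_
    rw [hlogb, hlogb]
    have hlog : Real.log ((i:ℝ) + 1 + 10) ≤ 2 * Real.log ((i:ℝ) + 10) := by
      have hi0 : (0:ℝ) ≤ (i:ℝ) := Nat.cast_nonneg i
      have h1 : ((i:ℝ) + 1 + 10) ≤ ((i:ℝ) + 10) ^ 2 := by nlinarith
      calc Real.log ((i:ℝ) + 1 + 10) ≤ Real.log (((i:ℝ) + 10) ^ 2) :=
            Real.log_le_log (by positivity) h1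
        _ = 2 * Real.log ((i:ℝ) + 10) := by
            rw [Real.log_pow]; push_cast; ring
    rw [pow_succ, div_le_div_iff₀ (by positivity) (by positivity)]
    push_cast
    nlinarith [mul_nonneg (sub_nonneg.mpr hlog) h2i.le]

/-- on the good event, if the empirical discrepancy between
windows `2^i` and `2^{i+1}` exceeds `4·S(2^i, δ)`, then a substantial drift
must have occurred: `max_{0 ≤ t ≤ 2^{i+1}−1} ‖P_T − P_{T−t}‖_F > S(2^i, δ)`. -/
theorem stmt3 {Z Ω : Type*} [MeasurableSpace Z]
    (F : ℕ → Z → ℝ) (hFmeas : ∀ n, Measurable (F n))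
    (B : ℝ) (hFbdd : ∀ n z, |F n z| ≤ B)
    (T : ℕ) (hT : 1 ≤ T) (P : ℕ → Measure Z)
    (hP : ∀ t, IsProbabilityMeasure (P t))
    (Zs : ℕ → Ω → Z) (ω : Ω)
    (C1 C2 : ℝ) (hC1 : 0 ≤ C1) (hC2 : 0 ≤ C2)
    (δ : ℝ) (hδ0 : 0 < δ) (hδ1 : δ < 1)
    (hgood : ∀ i : ℕ, 2 ^ i ≤ T →
      dPE F (avgMeas P T (2 ^ i)) Zs T (2 ^ i) ω ≤ Sfun C1 C2 (2 ^ i : ℕ) δ)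
    (i : ℕ) (hi : 2 ^ (i + 1) ≤ T)
    (hbig : dEE F Zs T (2 ^ i) (2 ^ (i + 1)) ω > 4 * Sfun C1 C2 (2 ^ i : ℕ) δ) :
    maxDrift F P T (2 ^ (i + 1)) > Sfun C1 C2 (2 ^ i : ℕ) δ := by
  have hr1 : 1 ≤ 2 ^ i := Nat.one_le_two_pow
  have hr'1 : 1 ≤ 2 ^ (i + 1) := Nat.one_le_two_pow
  have hrr' : 2 ^ i ≤ 2 ^ (i + 1) := Nat.pow_le_pow_right (by norm_num) (Nat.le_succ i)
  have hrT : 2 ^ i ≤ T := le_trans hrr' hi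
  have hB : 0 ≤ B := le_trans (abs_nonneg _) (hFbdd 0 (Zs 0 ω))
  haveI hPT : IsProbabilityMeasure (P T) := hP T
  haveI hPr : IsProbabilityMeasure (avgMeas P T (2 ^ i)) :=
    my_avgMeas_prob P hP T _ hr1 hrT
  haveI hPr' : IsProbabilityMeasure (avgMeas P T (2 ^ (i + 1))) :=
    my_avgMeas_prob P hP T _ hr'1 hi
  -- bounds on the individual terms
  have hAr : ∀ n, |∫ z, F n z ∂(avgMeas P T (2 ^ i))| ≤ B :=
    fun n => my_abs_integral_le (F n) (hFbdd n) _
  have hAr' : ∀ n, |∫ z, F n z ∂(avgMeas P T (2 ^ (i + 1)))| ≤ B :=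
    fun n => my_abs_integral_le (F n) (hFbdd n) _
  have hAT : ∀ n, |∫ z, F n z ∂(P T)| ≤ B :=
    fun n => my_abs_integral_le (F n) (hFbdd n) _
  have hEr : ∀ n, |empAvg Zs T (2 ^ i) (F n) ω| ≤ B :=
    fun n => my_empAvg_abs_le (F n) (hFbdd n) Zs ω T _ hr1 hrT
  have hEr' : ∀ n, |empAvg Zs T (2 ^ (i + 1)) (F n) ω| ≤ B :=
    fun n => my_empAvg_abs_le (F n) (hFbdd n) Zs ω T _ hr'1 hi
  -- drift bound : dF (avgMeas P T s) (P T) ≤ maxDrift for s ≤ 2^(i+1)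
  have hM0bdd : BddAbove (Set.range fun t : Fin (2 ^ (i + 1)) =>
      dF F (P T) (P (T - (t : ℕ)))) := (Set.finite_range _).bddAbove
  have hdrift : ∀ s : ℕ, 1 ≤ s → s ≤ 2 ^ (i + 1) →
      dF F (avgMeas P T s) (P T) ≤ maxDrift F P T (2 ^ (i + 1)) := by
    intro s hs1 hsr'
    have hsT : s ≤ T := le_trans hsr' hi
    have hcard : (Finset.Icc (T - s + 1) T).card = s := by rw [Nat.card_Icc]; omega
    have hs0 : (0:ℝ) < (s:ℝ) := by exact_mod_cast hs1
    refine ciSup_le fun n => ?_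
    rw [my_integral_avgMeas P hP T s (F n) (hFmeas n) (hFbdd n)]
    have hsplit : (s:ℝ)⁻¹ * (∑ t ∈ Finset.Icc (T - s + 1) T, ∫ z, F n z ∂(P t))
        - ∫ z, F n z ∂(P T)
        = (s:ℝ)⁻¹ * ∑ t ∈ Finset.Icc (T - s + 1) T,
            (∫ z, F n z ∂(P t) - ∫ z, F n z ∂(P T)) := by
      rw [Finset.sum_sub_distrib, Finset.sum_const, hcard, nsmul_eq_mul, mul_sub,
        inv_mul_cancel_left₀ hs0.ne']
    rw [hsplit, abs_mul, abs_inv, Nat.abs_cast]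
    have key : ∀ t ∈ Finset.Icc (T - s + 1) T,
        |∫ z, F n z ∂(P t) - ∫ z, F n z ∂(P T)| ≤ maxDrift F P T (2 ^ (i + 1)) := by
      intro t ht
      simp only [Finset.mem_Icc] at ht
      haveI := hP t
      have hlt : T - t < 2 ^ (i + 1) := by omega
      have hbdd : BddAbove (Set.range fun m =>
          |(∫ z, F m z ∂(P T)) - ∫ z, F m z ∂(P t)|) :=
        my_bdd_abs_sub hAT (fun m => my_abs_integral_le (F m) (hFbdd m) (P t))
      calc |(∫ z, F n z ∂(P t)) - ∫ z, F n z ∂(P T)|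
          = |(∫ z, F n z ∂(P T)) - ∫ z, F n z ∂(P t)| := abs_sub_comm _ _
        _ ≤ dF F (P T) (P t) := le_ciSup hbdd n
        _ ≤ maxDrift F P T (2 ^ (i + 1)) := by
            have h := le_ciSup hM0bdd (⟨T - t, hlt⟩ : Fin (2 ^ (i + 1)))
            simp only [Fin.val_mk] at h
            rwa [Nat.sub_sub_self ht.2] at h
    calc (s:ℝ)⁻¹ * |∑ t ∈ Finset.Icc (T - s + 1) T,
            (∫ z, F n z ∂(P t) - ∫ z, F n z ∂(P T))|
        ≤ (s:ℝ)⁻¹ * ∑ t ∈ Finset.Icc (T - s + 1) T,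
            |∫ z, F n z ∂(P t) - ∫ z, F n z ∂(P T)| := by
          gcongr
          exact Finset.abs_sum_le_sum_abs _ _
      _ ≤ (s:ℝ)⁻¹ * ∑ t ∈ Finset.Icc (T - s + 1) T, maxDrift F P T (2 ^ (i + 1)) := by
          gcongr with t ht
          exact key t ht
      _ = maxDrift F P T (2 ^ (i + 1)) := by
          rw [Finset.sum_const, hcard, nsmul_eq_mul, inv_mul_cancel_left₀ hs0.ne']
  -- main triangle inequality
  have bdd1 : BddAbove (Set.range fun n =>
      |(∫ z, F n z ∂(avgMeas P T (2 ^ i))) - empAvg Zs T (2 ^ i) (F n) ω|) :=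
    my_bdd_abs_sub hAr hEr
  have bdd2 : BddAbove (Set.range fun n =>
      |(∫ z, F n z ∂(avgMeas P T (2 ^ i))) - ∫ z, F n z ∂(P T)|) :=
    my_bdd_abs_sub hAr hAT
  have bdd3 : BddAbove (Set.range fun n =>
      |(∫ z, F n z ∂(P T)) - ∫ z, F n z ∂(avgMeas P T (2 ^ (i + 1)))|) :=
    my_bdd_abs_sub hAT hAr'
  have bdd4 : BddAbove (Set.range fun n =>
      |(∫ z, F n z ∂(avgMeas P T (2 ^ (i + 1)))) - empAvg Zs T (2 ^ (i + 1)) (F n) ω|) :=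
    my_bdd_abs_sub hAr' hEr'
  have step1 : dEE F Zs T (2 ^ i) (2 ^ (i + 1)) ω
      ≤ dPE F (avgMeas P T (2 ^ i)) Zs T (2 ^ i) ω
        + dF F (avgMeas P T (2 ^ i)) (P T)
        + dF F (P T) (avgMeas P T (2 ^ (i + 1)))
        + dPE F (avgMeas P T (2 ^ (i + 1))) Zs T (2 ^ (i + 1)) ω := by
    refine ciSup_le fun n => ?_
    have t1 : |empAvg Zs T (2 ^ i) (F n) ω - empAvg Zs T (2 ^ (i + 1)) (F n) ω|
        ≤ |(∫ z, F n z ∂(avgMeas P T (2 ^ i))) - empAvg Zs T (2 ^ i) (F n) ω|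
          + |(∫ z, F n z ∂(avgMeas P T (2 ^ i))) - ∫ z, F n z ∂(P T)|
          + |(∫ z, F n z ∂(P T)) - ∫ z, F n z ∂(avgMeas P T (2 ^ (i + 1)))|
          + |(∫ z, F n z ∂(avgMeas P T (2 ^ (i + 1)))) - empAvg Zs T (2 ^ (i + 1)) (F n) ω| := by
      have h1 := abs_sub_le (empAvg Zs T (2 ^ i) (F n) ω)
        (∫ z, F n z ∂(avgMeas P T (2 ^ i))) (empAvg Zs T (2 ^ (i + 1)) (F n) ω)
      have h2 := abs_sub_le (∫ z, F n z ∂(avgMeas P T (2 ^ i)))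
        (∫ z, F n z ∂(P T)) (empAvg Zs T (2 ^ (i + 1)) (F n) ω)
      have h3 := abs_sub_le (∫ z, F n z ∂(P T))
        (∫ z, F n z ∂(avgMeas P T (2 ^ (i + 1)))) (empAvg Zs T (2 ^ (i + 1)) (F n) ω)
      have h4 := abs_sub_comm (empAvg Zs T (2 ^ i) (F n) ω)
        (∫ z, F n z ∂(avgMeas P T (2 ^ i)))
      linarith
    refine le_trans t1 ?_
    gcongr
    · exact le_ciSup bdd1 n
    · exact le_ciSup bdd2 n
    · exact le_ciSup bdd3 n
    · exact le_ciSup bdd4 n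
  -- assemble
  have h1 := hgood i hrT
  have h2 := hgood (i + 1) hi
  have hmono := my_Sfun_mono C1 C2 δ hC1 hC2 hδ0 hδ1 i
  have hdsym : dF F (P T) (avgMeas P T (2 ^ (i + 1)))
      = dF F (avgMeas P T (2 ^ (i + 1))) (P T) := by
    unfold dF; exact iSup_congr fun n => abs_sub_comm _ _
  have hd1 := hdrift (2 ^ i) hr1 hrr'
  have hd2 := hdrift (2 ^ (i + 1)) hr'1 le_rfl
  rw [hdsym] at step1
  linarith
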